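/- Let A > 0, C_P > 0, |Ω| > 0 and μ > 0. There exists ν₀ > 0 such that for every ν ∈ (0, ν₀] there exist κ̃ > 0 and η ∈ (0,4] such that the cubic polynomial p(x) = ν − ηx + A(1 + 1/(4ν)) x³ + (4κ̃²|Ω|)/(C_P μ²) has a positive real root. Moreover, for each κ̂ ∈ [0, κ̃] the corresponding polynomial (with κ̃ replaced by κ̂) has a largest positive root δ_ν(κ̂) satisfying δ_ν(κ̃) ≤ δ_ν(κ̂) ≤ √(4 / (A(1 + 1/(4ν)))). -/
import Mathlib

private lemma auxGreatest (B K : ℝ) (hB : 0 < B) (hK : 0 < K)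
    (hneg : K < 8/3 * Real.sqrt (4/(3*B))) :
    IsGreatest {x : ℝ | 0 < x ∧ B*x^3 - 4*x + K = 0}
      (sSup {x : ℝ | 0 ≤ x ∧ B*x^3 - 4*x + K = 0}) ∧
    Real.sqrt (4/(3*B)) < sSup {x : ℝ | 0 ≤ x ∧ B*x^3 - 4*x + K = 0} ∧
    sSup {x : ℝ | 0 ≤ x ∧ B*x^3 - 4*x + K = 0} ≤ Real.sqrt (4/B) := by
  set s := Real.sqrt (4/(3*B)) with hsdef
  set t := Real.sqrt (4/B) with htdef
  have h4B : (0:ℝ) < 4/(3*B) := by positivity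
  have h4B' : (0:ℝ) < 4/B := by positivity
  have hs : 0 < s := Real.sqrt_pos.mpr h4B
  have ht : 0 < t := Real.sqrt_pos.mpr h4B'
  have hs2 : s^2 = 4/(3*B) := Real.sq_sqrt h4B.le
  have ht2 : t^2 = 4/B := Real.sq_sqrt h4B'.le
  have hst : s ≤ t := by
    rw [hsdef, htdef]
    apply Real.sqrt_le_sqrt
    rw [div_le_div_iff₀ (by positivity) hB]
    nlinarith
  have mono : ∀ x y : ℝ, s ≤ x → x < y → B*x^3 - 4*x + K < B*y^3 - 4*y + K := by
    intro x y hx hxy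
    have hx0 : 0 < x := hs.trans_le hx
    have hx2 : 4/(3*B) ≤ x^2 := by nlinarith
    have hy2 : 4/(3*B) < y^2 := by nlinarith
    have hxy2 : 4/(3*B) < x*y := by nlinarith
    have hfac : (0:ℝ) < B*(x^2+x*y+y^2) - 4 := by
      have h43 : 3*B*(4/(3*B)) = 4 := by field_simp
      nlinarith
    nlinarith [mul_pos (sub_pos.mpr hxy) hfac]
  have hBs2 : B * s^2 = 4/3 := by rw [hs2]; field_simp
  have hBt2 : B * t^2 = 4 := by rw [ht2]; field_simp
  have hfs : B*s^3 - 4*s + K < 0 := by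
    have he : B*s^3 - 4*s + K = K - 8/3*s := by linear_combination s * hBs2
    rw [he]; linarith
  have hft : B*t^3 - 4*t + K = K := by linear_combination t * hBt2
  have hcont : Continuous fun x : ℝ => B*x^3 - 4*x + K := by fun_prop
  have hivt := intermediate_value_Icc hst hcont.continuousOn
  have h0mem : (0:ℝ) ∈ Set.Icc (B*s^3-4*s+K) (B*t^3-4*t+K) := ⟨hfs.le, by rw [hft]; exact hK.le⟩
  obtain ⟨r, hrIcc, hr0⟩ := hivt h0mem
  have hr0' : B*r^3 - 4*r + K = 0 := hr0
  have hrs : s < r := by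
    rcases lt_or_eq_of_le hrIcc.1 with h | h
    · exact h
    · exfalso; rw [← h] at hr0'; linarith
  have hrSc : r ∈ {x : ℝ | 0 ≤ x ∧ B*x^3 - 4*x + K = 0} := ⟨(hs.trans hrs).le, hr0'⟩
  have hbdd : ∀ x ∈ {x : ℝ | 0 ≤ x ∧ B*x^3 - 4*x + K = 0}, x ≤ t := by
    intro x hx
    by_contra hxt
    push_neg at hxt
    have := mono t x hst hxt
    have hx2 := hx.2
    rw [hft] at this
    linarith
  have hclosed : IsClosed {x : ℝ | 0 ≤ x ∧ B*x^3 - 4*x + K = 0} :=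
    isClosed_Ici.inter (isClosed_eq (by fun_prop) continuous_const)
  have hBddA : BddAbove {x : ℝ | 0 ≤ x ∧ B*x^3 - 4*x + K = 0} := ⟨t, fun x hx => hbdd x hx⟩
  have hmem := hclosed.csSup_mem ⟨r, hrSc⟩ hBddA
  have hge : r ≤ sSup {x : ℝ | 0 ≤ x ∧ B*x^3 - 4*x + K = 0} := le_csSup hBddA hrSc
  have hgs : s < sSup {x : ℝ | 0 ≤ x ∧ B*x^3 - 4*x + K = 0} := hrs.trans_le hge
  have hgt : sSup {x : ℝ | 0 ≤ x ∧ B*x^3 - 4*x + K = 0} ≤ t :=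
    csSup_le ⟨r, hrSc⟩ (fun x hx => hbdd x hx)
  refine ⟨⟨⟨hs.trans hgs, hmem.2⟩, ?_⟩, hgs, hgt⟩
  intro x hx
  exact le_csSup hBddA ⟨hx.1.le, hx.2⟩

private lemma auxCompare (B K K' g g' : ℝ) (hB : 0 < B) (hKK : K' ≤ K)
    (hg : B*g^3 - 4*g + K = 0) (hg' : B*g'^3 - 4*g' + K' = 0)
    (hgs : Real.sqrt (4/(3*B)) < g) (hgs' : Real.sqrt (4/(3*B)) < g') :
    g ≤ g' := by
  set s := Real.sqrt (4/(3*B)) with hsdef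
  have h4B : (0:ℝ) < 4/(3*B) := by positivity
  have hs : 0 < s := Real.sqrt_pos.mpr h4B
  have hs2 : s^2 = 4/(3*B) := Real.sq_sqrt h4B.le
  by_contra h
  push_neg at h
  have h1 : s^2 < g'^2 := by nlinarith
  have h2 : s^2 < g*g' := by nlinarith
  have h3 : s^2 < g^2 := by nlinarith
  have hfac : (0:ℝ) < B*(g'^2 + g'*g + g^2) - 4 := by
    have h43 : 3*B*(4/(3*B)) = 4 := by field_simp
    nlinarith
  nlinarith [mul_pos (sub_pos.mpr h) hfac]

theorem stmt4 (A C_P vol μ : ℝ) (hA : 0 < A) (hC : 0 < C_P) (hvol : 0 < vol)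
    (hμ : 0 < μ) :
    ∃ ν₀ > (0:ℝ), ∀ ν ∈ Set.Ioc (0:ℝ) ν₀, ∃ κt > (0:ℝ), ∃ η ∈ Set.Ioc (0:ℝ) 4,
      (∃ x > (0:ℝ),
        ν - η * x + A * (1 + 1 / (4 * ν)) * x ^ 3 + 4 * κt ^ 2 * vol / (C_P * μ ^ 2) = 0) ∧
      ∃ δ : ℝ → ℝ, ∀ κh ∈ Set.Icc (0:ℝ) κt,
        IsGreatest {x : ℝ | 0 < x ∧
            ν - η * x + A * (1 + 1 / (4 * ν)) * x ^ 3 + 4 * κh ^ 2 * vol / (C_P * μ ^ 2) = 0}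
          (δ κh) ∧
        δ κt ≤ δ κh ∧ δ κh ≤ Real.sqrt (4 / (A * (1 + 1 / (4 * ν)))) := by
  refine ⟨min 1 (1/(2*A)), lt_min one_pos (by positivity), ?_⟩
  rintro ν ⟨hν0, hνle⟩
  have hν1 : ν ≤ 1 := hνle.trans (min_le_left _ _)
  have hν2 : ν ≤ 1/(2*A) := hνle.trans (min_le_right _ _)
  have hAν : ν * (2*A) ≤ 1 := by rwa [le_div_iff₀ (by positivity)] at hν2
  set B := A * (1 + 1 / (4 * ν)) with hBdef
  have hB : 0 < B := by rw [hBdef]; positivity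
  set κt := Real.sqrt (ν * (C_P * μ^2) / (4*vol)) with hκtdef
  have hκtpos : 0 < κt := Real.sqrt_pos.mpr (by positivity)
  have hκt2 : κt^2 = ν * (C_P * μ^2) / (4*vol) := Real.sq_sqrt (by positivity)
  have hκtval : 4 * κt ^ 2 * vol / (C_P * μ ^ 2) = ν := by
    rw [hκt2]; field_simp
  have hsmall : 2*ν < 8/3 * Real.sqrt (4/(3*B)) := by
    have hlt : 3/4*ν < Real.sqrt (4/(3*B)) := by
      rw [show (3:ℝ)/4*ν < Real.sqrt (4/(3*B)) ↔ (3/4*ν)^2 < 4/(3*B) from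
        Real.lt_sqrt (by positivity)]
      rw [lt_div_iff₀ (by positivity)]
      have e : (3/4*ν)^2 * (3*B) = 27/16*(A*ν^2) + 27/64*(A*ν) := by
        rw [hBdef]; field_simp; ring
      rw [e]
      nlinarith [mul_pos hA hν0, mul_nonneg hA.le (sq_nonneg ν)]
    linarith
  have hKpos : ∀ κh : ℝ, 0 < ν + 4 * κh ^ 2 * vol / (C_P * μ ^ 2) := by
    intro κh; positivity
  have hKle : ∀ κh ∈ Set.Icc (0:ℝ) κt, ν + 4 * κh ^ 2 * vol / (C_P * μ ^ 2) ≤ 2*ν := by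
    rintro κh ⟨hκh0, hκht⟩
    have hsq : κh^2 ≤ κt^2 := by nlinarith
    have : 4 * κh ^ 2 * vol / (C_P * μ ^ 2) ≤ 4 * κt ^ 2 * vol / (C_P * μ ^ 2) := by
      gcongr
    linarith [hκtval ▸ this]
  have haux : ∀ κh ∈ Set.Icc (0:ℝ) κt,
      IsGreatest {x : ℝ | 0 < x ∧ B*x^3 - 4*x + (ν + 4 * κh ^ 2 * vol / (C_P * μ ^ 2)) = 0}
        (sSup {x : ℝ | 0 ≤ x ∧ B*x^3 - 4*x + (ν + 4 * κh ^ 2 * vol / (C_P * μ ^ 2)) = 0}) ∧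
      Real.sqrt (4/(3*B)) <
        sSup {x : ℝ | 0 ≤ x ∧ B*x^3 - 4*x + (ν + 4 * κh ^ 2 * vol / (C_P * μ ^ 2)) = 0} ∧
      sSup {x : ℝ | 0 ≤ x ∧ B*x^3 - 4*x + (ν + 4 * κh ^ 2 * vol / (C_P * μ ^ 2)) = 0} ≤
        Real.sqrt (4/B) := by
    intro κh hκh
    exact auxGreatest B _ hB (hKpos κh) (lt_of_le_of_lt (hKle κh hκh) hsmall)
  have hκtmem : κt ∈ Set.Icc (0:ℝ) κt := ⟨hκtpos.le, le_rfl⟩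
  set δ : ℝ → ℝ := fun κh =>
    sSup {x : ℝ | 0 ≤ x ∧ B*x^3 - 4*x + (ν + 4 * κh ^ 2 * vol / (C_P * μ ^ 2)) = 0} with hδdef
  have hSeq : ∀ κh : ℝ,
      {x : ℝ | 0 < x ∧ ν - 4 * x + B * x ^ 3 + 4 * κh ^ 2 * vol / (C_P * μ ^ 2) = 0} =
      {x : ℝ | 0 < x ∧ B*x^3 - 4*x + (ν + 4 * κh ^ 2 * vol / (C_P * μ ^ 2)) = 0} := by
    intro κh
    ext x
    simp only [Set.mem_setOf_eq]
    constructor <;> rintro ⟨h1, h2⟩ <;> exact ⟨h1, by linarith⟩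
  refine ⟨κt, hκtpos, 4, ⟨by norm_num, le_rfl⟩, ?_, δ, ?_⟩
  · obtain ⟨⟨⟨hpos, heq⟩, _⟩, _, _⟩ := haux κt hκtmem
    exact ⟨δ κt, hpos, by linarith⟩
  · intro κh hκh
    obtain ⟨hgr, hgs, hgt⟩ := haux κh hκh
    obtain ⟨hgrT, hgsT, _⟩ := haux κt hκtmem
    refine ⟨?_, ?_, hgt⟩
    · rw [hSeq κh]; exact hgr
    · refine auxCompare B (ν + 4 * κt ^ 2 * vol / (C_P * μ ^ 2))
        (ν + 4 * κh ^ 2 * vol / (C_P * μ ^ 2)) (δ κt) (δ κh) hB ?_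
        hgrT.1.2 hgr.1.2 hgsT hgs
      have hsq : κh^2 ≤ κt^2 := by
        obtain ⟨h0, h1⟩ := hκh
        nlinarith
      have : 4 * κh ^ 2 * vol / (C_P * μ ^ 2) ≤ 4 * κt ^ 2 * vol / (C_P * μ ^ 2) := by gcongr
      linarith
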